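/- arXiv:2211.05650 — 3 statements merged into one kernel-verified Lean document; each statement's English description precedes it below -/
import Mathlib

section
/- For any z = (z_1,...,z_m) with all z_j ≥ 0, the power sum kernel k_z : S_n × S_n → ℝ is positive semidefinite: for any permutations g_1,...,g_N ∈ S_n and reals a_1,...,a_N, one has Σ_{i,j} a_i a_j k_z(g_i, g_j) ≥ 0. -/
/-!
A colouring `f : α → ι` satisfies `f ∘ σ = f` exactly when it is constant on the cycles of `σ`,
and a cycle of length `d` contributes `∑ i, z i ^ d`; hence
`p_{μ(σ)}(z) = ∑_{f ∘ σ = f} ∏ x, z (f x)`. As `f ∘ (g * h⁻¹) = f ↔ f ∘ g = f ∘ h`, this writes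
`k_z(g, h) = ∑_f (∏ x, z (f x)) [f ∘ g = f ∘ h]`, a combination with nonnegative weights of the
kernels `[φ g = φ h]`, each positive semidefinite as
`∑ i j, a i a j [v i = v j] = ∑_b (∑_{v i = b} a i)²`.
-/

/-- The cycle lengths of a permutation, including fixed points as cycles of length 1,
as a multiset (the sorted sequence `μ(g)`). -/
def cycleMu {n : ℕ} (g : Equiv.Perm (Fin n)) : Multiset ℕ :=
  g.cycleType + Multiset.replicate (n - g.cycleType.sum) 1

/-- The power sum kernel `k_z(g,h) = p_{μ(g h⁻¹)}(z) = ∏_j Σ_i z_i^{μ_j}`. -/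
def powerSumKernel {n m : ℕ} (z : Fin m → ℝ) (g h : Equiv.Perm (Fin n)) : ℝ :=
  ((cycleMu (g * h⁻¹)).map (fun d => ∑ i, z i ^ d)).prod

open Equiv Equiv.Perm Finset

theorem sum_prod_comp_eq_prod_sum_pow {α β ι R : Type*} [Fintype α] [Fintype β]
    [DecidableEq β] [Fintype ι] [CommSemiring R] (p : α → β) (z : ι → R) :
    ∑ F : β → ι, ∏ x, z (F (p x)) = ∏ b, ∑ i, z i ^ #{x | p x = b} := by
  have h (F : β → ι) : ∏ x, z (F (p x)) = ∏ b, z (F b) ^ #{x | p x = b} := by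
    rw [← prod_fiberwise' univ p (fun b => z (F b))]
    simp only [prod_const]
  simp_rw [h, Fintype.prod_sum]

theorem sum_sum_mul_mul_ite_eq_nonneg {ι β R : Type*} [Fintype ι] [DecidableEq β] [CommRing R]
    [LinearOrder R] [IsStrictOrderedRing R] (v : ι → β) (a : ι → R) :
    0 ≤ ∑ i, ∑ j, a i * a j * if v i = v j then 1 else 0 := by
  have h : ∑ i, ∑ j, a i * a j * (if v i = v j then 1 else 0)
      = ∑ b ∈ univ.image v, (∑ i with v i = b, a i) ^ 2 := by
    rw [← sum_fiberwise_of_maps_to fun i _ => mem_image_of_mem v (mem_univ i)]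
    refine sum_congr rfl fun b _ => ?_
    rw [sq, sum_mul_sum]
    refine sum_congr rfl fun i hi => ?_
    rw [(mem_filter.1 hi).2, sum_filter]
    simp only [mul_ite, mul_one, mul_zero, eq_comm]
  rw [h]
  positivity

namespace Equiv.Perm

variable {α : Type*} [Fintype α] [DecidableEq α]

instance (σ : Perm α) : DecidableRel (SameCycle.setoid σ).r :=
  inferInstanceAs (DecidableRel σ.SameCycle)

omit [DecidableEq α] in
theorem apply_eq_apply_of_comp_eq_self {ι : Type*} {σ : Perm α} {f : α → ι} (hf : f ∘ σ = f)
    {x y : α} (h : σ.SameCycle x y) : f x = f y := by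
  obtain ⟨i, rfl⟩ := h.exists_nat_pow_eq
  have hσ : Function.Semiconj f σ id := congrFun hf
  simpa [coe_pow] using (hσ.iterate_right i x).symm

theorem sum_comp_eq_self_eq_sum_comp_mk {ι M : Type*} [Fintype ι] [DecidableEq ι]
    [AddCommMonoid M] (σ : Perm α) (φ : (α → ι) → M) :
    ∑ f with f ∘ σ = f, φ f
      = ∑ F : Quotient (SameCycle.setoid σ) → ι, φ (F ∘ Quotient.mk _) := by
  rw [← sum_image fun F _ G _ h => Quotient.mk_surjective.injective_comp_right h]
  congr 1
  ext f
  simp only [mem_filter, mem_univ, true_and, mem_image]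
  constructor
  · intro hf
    exact ⟨Quotient.lift f fun x y => apply_eq_apply_of_comp_eq_self hf, rfl⟩
  · rintro ⟨F, -, rfl⟩
    funext x
    exact congrArg F (Quotient.sound (sameCycle_apply_left.2 (SameCycle.refl σ x)))

theorem cycleFactorsFinset_eq_image_cycleOf (σ : Perm α) :
    σ.cycleFactorsFinset = σ.support.image σ.cycleOf := by
  ext c
  simp only [mem_image]
  constructor
  · intro hc
    obtain ⟨x, hx⟩ := (mem_cycleFactorsFinset_iff.1 hc).1.nonempty_support
    exact ⟨x, mem_cycleFactorsFinset_support_le hc hx, (cycle_is_cycleOf hx hc).symm⟩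
  · rintro ⟨x, hx, rfl⟩
    exact cycleOf_mem_cycleFactorsFinset_iff.2 hx

theorem card_sameCycle_class_of_mem_support {σ : Perm α} {x : α} (hx : x ∈ σ.support) :
    #{y | Quotient.mk (SameCycle.setoid σ) y = Quotient.mk _ x} = #(σ.cycleOf x).support := by
  congr 1
  ext y
  simp only [mem_filter, mem_univ, true_and, Quotient.eq, mem_support_cycleOf_iff, hx, and_true]
  exact sameCycle_comm

theorem card_sameCycle_class_of_notMem_support {σ : Perm α} {x : α} (hx : x ∉ σ.support) :
    #{y | Quotient.mk (SameCycle.setoid σ) y = Quotient.mk _ x} = 1 := by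
  rw [card_eq_one]
  refine ⟨x, ?_⟩
  ext y
  simp only [mem_filter, mem_univ, true_and, Quotient.eq, mem_singleton]
  exact ⟨fun h => h.eq_of_right (notMem_support.1 hx), fun h => h ▸ SameCycle.refl σ x⟩

theorem map_card_sameCycle_classes_eq_parts_partition (σ : Perm α) :
    (univ : Finset (Quotient (SameCycle.setoid σ))).val.map
      (fun q => #{x | Quotient.mk _ x = q}) = σ.partition.parts := by
  set mk := Quotient.mk (SameCycle.setoid σ)
  set S := σ.support
  have hdisj : _root_.Disjoint (S.image mk) (Sᶜ.image mk) := by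
    simp only [disjoint_left, mem_image, mem_compl, not_exists, not_and]
    rintro _ ⟨x, hx, rfl⟩ y hy hxy
    exact hy (mem_support.2 fun hfix =>
      mem_support.1 hx ((Quotient.exact hxy).apply_eq_self_iff.1 hfix))
  have huniv : univ = (S.image mk).disjUnion (Sᶜ.image mk) hdisj := by
    rw [disjUnion_eq_union, ← image_union, union_compl,
      image_univ_of_surjective Quotient.mk_surjective]
  rw [huniv, disjUnion_val, Multiset.map_add, parts_partition]
  congr 1
  · let Φ : Quotient (SameCycle.setoid σ) → Perm α :=
      Quotient.lift σ.cycleOf fun _ _ => SameCycle.cycleOf_eq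
    have hΦ : Set.InjOn Φ (S.image mk) := by
      simp only [Set.InjOn, coe_image, Set.mem_image, mem_coe]
      rintro _ ⟨x, hx, rfl⟩ _ ⟨y, hy, rfl⟩ hxy
      exact Quotient.sound ((sameCycle_iff_cycleOf_eq_of_mem_support hx hy).2 hxy)
    rw [cycleType_def, cycleFactorsFinset_eq_image_cycleOf,
      show σ.cycleOf = Φ ∘ mk from rfl, ← image_image,
      image_val_of_injOn hΦ, Multiset.map_map]
    refine Multiset.map_congr rfl fun q hq => ?_
    obtain ⟨x, hx, rfl⟩ := mem_image.1 (mem_def.2 hq)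
    simp [mk, Φ, card_sameCycle_class_of_mem_support hx]
  · have hmk : Set.InjOn mk ↑Sᶜ := fun x hx y _ hxy =>
      (Quotient.exact hxy).eq_of_left (notMem_support.1 (mem_compl.1 hx))
    rw [image_val_of_injOn hmk, Multiset.map_map, ← card_compl, ← card_val,
      ← Multiset.map_const']
    refine Multiset.map_congr rfl fun x hx => ?_
    exact card_sameCycle_class_of_notMem_support (mem_compl.1 (mem_def.2 hx))

theorem prod_map_parts_partition_sum_pow {ι R : Type*} [Fintype ι] [DecidableEq ι]
    [CommSemiring R] (σ : Perm α) (z : ι → R) :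
    (σ.partition.parts.map fun d => ∑ i, z i ^ d).prod
      = ∑ f with f ∘ σ = f, ∏ x, z (f x) := by
  simp only [sum_comp_eq_self_eq_sum_comp_mk, Function.comp_apply]
  rw [sum_prod_comp_eq_prod_sum_pow, ← map_card_sameCycle_classes_eq_parts_partition,
    Multiset.map_map, prod_eq_multiset_prod]
  rfl

end Equiv.Perm

theorem cycleMu_eq_parts_partition {n : ℕ} (g : Perm (Fin n)) :
    cycleMu g = g.partition.parts := by
  rw [cycleMu, parts_partition, sum_cycleType, Fintype.card_fin]

theorem powerSumKernel_eq_sum {n m : ℕ} (z : Fin m → ℝ) (g h : Perm (Fin n)) :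
    powerSumKernel z g h
      = ∑ f : Fin n → Fin m, (∏ x, z (f x)) * if f ∘ g = f ∘ h then 1 else 0 := by
  rw [powerSumKernel, cycleMu_eq_parts_partition, prod_map_parts_partition_sum_pow, sum_filter]
  refine sum_congr rfl fun f _ => ?_
  rw [mul_ite, mul_one, mul_zero]
  refine if_congr ?_ rfl rfl
  rw [coe_mul, ← Function.comp_assoc, Perm.inv_def, comp_symm_eq]

theorem powerSumKernel_posSemidef {n m : ℕ} (z : Fin m → ℝ) (hz : ∀ j, 0 ≤ z j)
    (N : ℕ) (g : Fin N → Equiv.Perm (Fin n)) (a : Fin N → ℝ) :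
    0 ≤ ∑ i, ∑ j, a i * a j * powerSumKernel z (g i) (g j) := by
  have hsum : ∑ f : Fin n → Fin m, (∏ x, z (f x)) *
        ∑ i, ∑ j, a i * a j * (if f ∘ g i = f ∘ g j then 1 else 0)
      = ∑ i, ∑ j, a i * a j * powerSumKernel z (g i) (g j) := by
    simp only [powerSumKernel_eq_sum, mul_sum]
    rw [sum_comm]
    refine sum_congr rfl fun i _ => ?_
    rw [sum_comm]
    exact sum_congr rfl fun j _ => sum_congr rfl fun f _ => by ring
  rw [← hsum]
  exact sum_nonneg fun f _ =>
    mul_nonneg (prod_nonneg fun x _ => hz (f x)) (sum_sum_mul_mul_ite_eq_nonneg _ a)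
end

section
/- Define h ≺ g in S_n to mean that some shortest path in the Cayley graph of S_n (generated by transpositions) from the identity e to g passes through h. If h ≺ g and z ∈ ℝ^m with z_j ≥ 0 and m > 1, then k_z(h, e) ≥ k_z(g, e). If z_j > 0 for at least two distinct indices j, then k_z(h, e) > k_z(g, e) whenever h ≠ g. -/
/-- The Cayley graph of `S_n` with respect to the set of all transpositions. -/
def cayleyGraph (n : ℕ) : SimpleGraph (Equiv.Perm (Fin n)) :=
  SimpleGraph.fromRel (fun g h => (g * h⁻¹).IsSwap)

/-- `h ≺ g`: some shortest path in the Cayley graph from the identity to `g`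
passes through `h`. -/
def cayleyPrec {n : ℕ} (h g : Equiv.Perm (Fin n)) : Prop :=
  (cayleyGraph n).dist 1 h + (cayleyGraph n).dist h g = (cayleyGraph n).dist 1 g

namespace CayleyAux

open Equiv Equiv.Perm Finset

variable {n m : ℕ}

instance (σ : Perm (Fin n)) : DecidableEq (Quotient (SameCycle.setoid σ)) :=
  @Quotient.decidableEq _ _ (fun x y => (inferInstance : Decidable (σ.SameCycle x y)))

instance (σ : Perm (Fin n)) : Fintype (Quotient (SameCycle.setoid σ)) :=
  @Quotient.fintype _ _ (SameCycle.setoid σ)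
    (fun x y => (inferInstance : Decidable (σ.SameCycle x y)))

/-- Number of cycles (orbits, including fixed points) of a permutation. -/
noncomputable def cnt (σ : Perm (Fin n)) : ℕ := Nat.card (Quotient (SameCycle.setoid σ))

/-- Join of a setoid with one extra pair `a ~ b`. -/
def joinS (s : Setoid (Fin n)) (a b : Fin n) : Setoid (Fin n) :=
  ⟨fun x y => s.r x y ∨ ((s.r x a ∨ s.r x b) ∧ (s.r y a ∨ s.r y b)), by
    constructor
    · exact fun x => Or.inl (s.refl x)
    · rintro x y (h | ⟨h1, h2⟩)
      · exact Or.inl (s.symm h)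
      · exact Or.inr ⟨h2, h1⟩
    · rintro x y z (h | ⟨h1, h2⟩) (h' | ⟨h1', h2'⟩)
      · exact Or.inl (s.trans h h')
      · exact Or.inr ⟨h1'.imp (fun hy => s.trans h hy) (fun hy => s.trans h hy), h2'⟩
      · exact Or.inr ⟨h1, h2.imp (fun hy => s.trans (s.symm h') hy)
          (fun hy => s.trans (s.symm h') hy)⟩
      · exact Or.inr ⟨h1, h2'⟩⟩

lemma count_le_of_le {s s' : Setoid (Fin n)} (hle : ∀ x y, s.r x y → s'.r x y) :
    Nat.card (Quotient s') ≤ Nat.card (Quotient s) := by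
  have hf : Function.Surjective (Quot.map (fun x => x) hle : Quotient s → Quotient s') := by
    intro q; induction q using Quot.ind with | _ x => exact ⟨Quot.mk _ x, rfl⟩
  exact Nat.card_le_card_of_surjective _ hf

lemma count_join_ge (s : Setoid (Fin n)) (a b : Fin n) :
    Nat.card (Quotient s) ≤ Nat.card (Quotient (joinS s a b)) + 1 := by
  classical
  set t := joinS s a b with ht
  let π : Quotient s → Quotient t := Quot.map (fun x => x) (fun x y h => Or.inl h)
  let f : Quotient s → Quotient t ⊕ Unit := fun q =>
    if q = Quotient.mk s b then Sum.inr () else Sum.inl (π q)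
  have hinj : Function.Injective f := by
    intro q1 q2 hq
    by_cases h1 : q1 = Quotient.mk s b
    · by_cases h2 : q2 = Quotient.mk s b
      · rw [h1, h2]
      · exfalso; simp only [f, if_pos h1, if_neg h2] at hq; exact Sum.inr_ne_inl hq
    · by_cases h2 : q2 = Quotient.mk s b
      · exfalso; simp only [f, if_pos h2, if_neg h1] at hq; exact Sum.inl_ne_inr hq
      · simp only [f, if_neg h1, if_neg h2, Sum.inl.injEq] at hq
        revert hq h1 h2
        induction q1 using Quotient.ind with | _ x => ?_
        induction q2 using Quotient.ind with | _ y => ?_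
        intro h1 h2 hq
        have htr : t.r x y := Quotient.exact hq
        rcases htr with h | ⟨hx, hy⟩
        · exact Quotient.sound h
        · have hxa : s.r x a := hx.resolve_right (fun hxb => h1 (Quotient.sound hxb))
          have hya : s.r y a := hy.resolve_right (fun hyb => h2 (Quotient.sound hyb))
          exact Quotient.sound (s.trans hxa (s.symm hya))
  calc Nat.card (Quotient s) ≤ Nat.card (Quotient t ⊕ Unit) :=
        Nat.card_le_card_of_injective f hinj
    _ = Nat.card (Quotient t) + 1 := by rw [Nat.card_sum]; simp

lemma sameCycle_of_not_mem_support {σ : Perm (Fin n)} {x y : Fin n}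
    (hx : x ∉ σ.support) : σ.SameCycle x y ↔ y = x := by
  constructor
  · rintro ⟨i, rfl⟩
    exact zpow_apply_eq_self_of_apply_eq_self (by simpa using hx) i
  · rintro rfl; exact SameCycle.refl _ _

/-- The bijection between cycles-or-fixed-points and `SameCycle` classes. -/
noncomputable def E (σ : Perm (Fin n)) (q : Quotient (SameCycle.setoid σ)) :
    ↥σ.cycleFactorsFinset ⊕ {x : Fin n // x ∉ σ.support} :=
  if h : q.out ∈ σ.support then
    Sum.inl ⟨σ.cycleOf q.out, cycleOf_mem_cycleFactorsFinset_iff.mpr h⟩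
  else Sum.inr ⟨q.out, h⟩

lemma E_bij (σ : Perm (Fin n)) : Function.Bijective (E σ) := by
  constructor
  · intro q q' hqq'
    unfold E at hqq'
    by_cases h : q.out ∈ σ.support <;> by_cases h' : q'.out ∈ σ.support
    · rw [dif_pos h, dif_pos h'] at hqq'
      simp only [Sum.inl.injEq, Subtype.mk.injEq] at hqq'
      have hy : q'.out ∈ (σ.cycleOf q.out).support := by
        rw [hqq']
        exact mem_support_cycleOf_iff.mpr ⟨SameCycle.refl _ _, h'⟩
      have hs : σ.SameCycle q.out q'.out := (mem_support_cycleOf_iff.mp hy).1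
      rw [← q.out_eq, ← q'.out_eq]
      exact Quotient.sound hs
    · rw [dif_pos h, dif_neg h'] at hqq'; exact absurd hqq' (by simp)
    · rw [dif_neg h, dif_pos h'] at hqq'; exact absurd hqq' (by simp)
    · rw [dif_neg h, dif_neg h'] at hqq'
      simp only [Sum.inr.injEq, Subtype.mk.injEq] at hqq'
      rw [← q.out_eq, ← q'.out_eq, hqq']
  · rintro (⟨c, hc⟩ | ⟨x, hx⟩)
    · obtain ⟨x, hx⟩ := (mem_cycleFactorsFinset_iff.mp hc).1.nonempty_support
      have hxσ : x ∈ σ.support := mem_cycleFactorsFinset_support_le hc hx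
      refine ⟨Quotient.mk _ x, ?_⟩
      have hout : σ.SameCycle (Quotient.mk (SameCycle.setoid σ) x).out x :=
        @Quotient.mk_out _ (SameCycle.setoid σ) x
      have houts : (Quotient.mk (SameCycle.setoid σ) x).out ∈ σ.support :=
        (hout.mem_support_iff).mpr hxσ
      unfold E
      rw [dif_pos houts]
      congr 1
      refine Subtype.ext ?_
      show σ.cycleOf (Quotient.mk (SameCycle.setoid σ) x).out = c
      rw [hout.cycleOf_eq]
      exact (cycle_is_cycleOf hx hc).symm
    · refine ⟨Quotient.mk _ x, ?_⟩
      have hout : σ.SameCycle (Quotient.mk (SameCycle.setoid σ) x).out x :=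
        @Quotient.mk_out _ (SameCycle.setoid σ) x
      have hxx : (Quotient.mk (SameCycle.setoid σ) x).out = x :=
        (sameCycle_of_not_mem_support hx).mp hout.symm
      have hns : (Quotient.mk (SameCycle.setoid σ) x).out ∉ σ.support := by
        rw [hxx]; exact hx
      unfold E
      rw [dif_neg hns]
      exact congrArg _ (Subtype.ext hxx)

lemma size_eq (σ : Perm (Fin n)) (q : Quotient (SameCycle.setoid σ)) :
    (univ.filter (fun x => Quotient.mk (SameCycle.setoid σ) x = q)).card =
      Sum.elim (fun c : ↥σ.cycleFactorsFinset => c.1.support.card) (fun _ => 1) (E σ q) := by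
  unfold E
  by_cases h : q.out ∈ σ.support
  · rw [dif_pos h]
    simp only [Sum.elim_inl]
    congr 1
    ext y
    simp only [mem_filter, mem_univ, true_and, mem_support_cycleOf_iff]
    constructor
    · intro hy
      have hq : (Quotient.mk (SameCycle.setoid σ) y) = Quotient.mk _ q.out := by
        rw [hy, q.out_eq]
      have hsc : σ.SameCycle y q.out := Quotient.exact hq
      exact ⟨hsc.symm, h⟩
    · intro ⟨hy, _⟩
      rw [← q.out_eq]
      exact Quotient.sound hy.symm
  · rw [dif_neg h]
    simp only [Sum.elim_inr]
    rw [Finset.card_eq_one]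
    refine ⟨q.out, ?_⟩
    ext y
    simp only [mem_filter, mem_univ, true_and, mem_singleton]
    constructor
    · intro hy
      have hq : (Quotient.mk (SameCycle.setoid σ) y) = Quotient.mk _ q.out := by
        rw [hy, q.out_eq]
      have hsc : σ.SameCycle y q.out := Quotient.exact hq
      exact (sameCycle_of_not_mem_support h).mp hsc.symm
    · rintro rfl; exact q.out_eq

lemma cycleMu_eq (σ : Perm (Fin n)) :
    cycleMu σ = (univ : Finset (Quotient (SameCycle.setoid σ))).val.map
      (fun q => (univ.filter (fun x => Quotient.mk (SameCycle.setoid σ) x = q)).card) := by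
  have hmap : (univ : Finset (Quotient (SameCycle.setoid σ))).val.map
      (fun q => (univ.filter (fun x => Quotient.mk (SameCycle.setoid σ) x = q)).card)
      = (univ : Finset (Quotient (SameCycle.setoid σ))).val.map
        ((Sum.elim (fun c : ↥σ.cycleFactorsFinset => c.1.support.card) (fun _ => 1)) ∘ (E σ)) :=
    Multiset.map_congr rfl (fun q _ => size_eq σ q)
  have huniv : Multiset.map (E σ) (univ : Finset (Quotient (SameCycle.setoid σ))).val
      = (univ : Finset (↥σ.cycleFactorsFinset ⊕ {x : Fin n // x ∉ σ.support})).val :=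
    Multiset.map_univ_val_equiv (Equiv.ofBijective _ (E_bij σ))
  rw [hmap, ← Multiset.map_map, huniv]
  rw [← Finset.univ_disjSum_univ]
  show cycleMu σ = Multiset.map _ (Multiset.map Sum.inl _ + Multiset.map Sum.inr _)
  rw [Multiset.map_add, Multiset.map_map, Multiset.map_map]
  simp only [Function.comp_def, Sum.elim_inl, Sum.elim_inr]
  have h1 : ((univ : Finset ↥σ.cycleFactorsFinset).val.map (fun c => c.1.support.card))
      = σ.cycleType := by
    rw [Finset.univ_eq_attach]
    have hval : Multiset.map Subtype.val σ.cycleFactorsFinset.attach.val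
        = σ.cycleFactorsFinset.val := by
      have h := congrArg Finset.val (Finset.attach_map_val (s := σ.cycleFactorsFinset))
      rwa [Finset.map_val] at h
    show Multiset.map ((fun p : Perm (Fin n) => p.support.card) ∘ Subtype.val)
      σ.cycleFactorsFinset.attach.val = _
    rw [← Multiset.map_map, hval, cycleType_def]
    rfl
  have h2 : ((univ : Finset {x : Fin n // x ∉ σ.support}).val.map (fun _ => 1))
      = Multiset.replicate (n - σ.cycleType.sum) 1 := by
    rw [Multiset.map_const']
    congr 1
    show Fintype.card {x : Fin n // x ∉ σ.support} = _
    rw [Fintype.card_subtype_compl, Fintype.card_fin, Fintype.card_coe, sum_cycleType]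
  rw [h1, h2]
  rfl

lemma card_cycleMu (σ : Perm (Fin n)) : Multiset.card (cycleMu σ) = cnt σ := by
  rw [cycleMu_eq, Multiset.card_map]
  show (univ : Finset (Quotient (SameCycle.setoid σ))).card = _
  rw [Finset.card_univ, cnt, Nat.card_eq_fintype_card]

lemma cnt_le (σ : Perm (Fin n)) : cnt σ ≤ n := by
  have hsurj : Function.Surjective (Quotient.mk (SameCycle.setoid σ)) :=
    fun q => ⟨q.out, q.out_eq⟩
  have h := Nat.card_le_card_of_surjective _ hsurj
  rw [cnt]
  simpa using h

lemma cnt_one : cnt (1 : Perm (Fin n)) = n := by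
  have : Function.Bijective (Quotient.mk (SameCycle.setoid (1 : Perm (Fin n)))) := by
    refine ⟨fun x y hxy => ?_, fun q => ⟨q.out, q.out_eq⟩⟩
    exact sameCycle_one.mp (Quotient.exact hxy)
  rw [cnt, ← Nat.card_congr (Equiv.ofBijective _ this)]
  simp

lemma eq_one_of_cnt_eq (σ : Perm (Fin n)) (h : cnt σ = n) : σ = 1 := by
  have hsurj : Function.Surjective (Quotient.mk (SameCycle.setoid σ)) :=
    fun q => ⟨q.out, q.out_eq⟩
  have hbij : Function.Bijective (Quotient.mk (SameCycle.setoid σ)) := by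
    rw [Fintype.bijective_iff_surjective_and_card]
    refine ⟨hsurj, ?_⟩
    rw [Fintype.card_fin]
    have h2 := h
    rw [cnt, Nat.card_eq_fintype_card] at h2
    omega
  ext x
  have hsc : σ.SameCycle x (σ x) := ⟨1, by simp⟩
  have hq := hbij.1 (Quotient.sound hsc : Quotient.mk (SameCycle.setoid σ) x = _)
  simp [← hq]

lemma sign_cnt (σ : Perm (Fin n)) : Perm.sign σ = (-1 : ℤˣ) ^ (n + cnt σ) := by
  have hsum : σ.cycleType.sum ≤ n := by
    rw [sum_cycleType]
    simpa using Finset.card_le_univ σ.support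
  have hcnt : cnt σ = Multiset.card σ.cycleType + (n - σ.cycleType.sum) := by
    rw [← card_cycleMu, cycleMu]
    simp
  have hexp : n + cnt σ = (σ.cycleType.sum + Multiset.card σ.cycleType)
      + 2 * (n - σ.cycleType.sum) := by omega
  rw [sign_of_cycleType, hexp, pow_add, pow_add]
  norm_num
  exact (pow_add (-1 : ℤˣ) _ _).symm

lemma sameCycle_swap_mul_le (σ : Perm (Fin n)) (a b : Fin n) {x y : Fin n}
    (hxy : (swap a b * σ).SameCycle x y) : (joinS (SameCycle.setoid σ) a b).r x y := by
  suffices h : ∀ i : ℕ, (joinS (SameCycle.setoid σ) a b).r x (((swap a b * σ) ^ i) x) by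
    obtain ⟨i, -, hi⟩ := hxy.exists_pow_eq'
    rw [← hi]; exact h i
  intro i
  induction i with
  | zero => exact Or.inl (SameCycle.refl σ x)
  | succ i ih =>
    set w := ((swap a b * σ) ^ i) x with hw
    have hstep : ((swap a b * σ) ^ (i + 1)) x = swap a b (σ w) := by
      rw [pow_succ', Perm.mul_apply, Perm.mul_apply]
    rw [hstep]
    have hws : σ.SameCycle w (σ w) := ⟨1, by simp⟩
    rcases eq_or_ne (σ w) a with ha | ha
    · rw [ha, swap_apply_left]
      have hwa : σ.SameCycle w a := ha ▸ hws
      rcases ih with h | ⟨h1, h2⟩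
      · exact Or.inr ⟨Or.inl (h.trans hwa), Or.inr (SameCycle.refl σ b)⟩
      · exact Or.inr ⟨h1, Or.inr (SameCycle.refl σ b)⟩
    · rcases eq_or_ne (σ w) b with hb | hb
      · rw [hb, swap_apply_right]
        have hwb : σ.SameCycle w b := hb ▸ hws
        rcases ih with h | ⟨h1, h2⟩
        · exact Or.inr ⟨Or.inr (h.trans hwb), Or.inl (SameCycle.refl σ a)⟩
        · exact Or.inr ⟨h1, Or.inl (SameCycle.refl σ a)⟩
      · rw [swap_apply_of_ne_of_ne ha hb]
        rcases ih with h | ⟨h1, h2⟩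
        · exact Or.inl (h.trans hws)
        · exact Or.inr ⟨h1, h2.imp (fun hy => hws.symm.trans hy) (fun hy => hws.symm.trans hy)⟩

lemma sameCycle_swap_mul_of_sameCycle {σ : Perm (Fin n)} {a b : Fin n}
    (hab : σ.SameCycle a b) {x y : Fin n} (hxy : (swap a b * σ).SameCycle x y) :
    σ.SameCycle x y := by
  rcases sameCycle_swap_mul_le σ a b hxy with h | ⟨h1, h2⟩
  · exact h
  · have hx : σ.SameCycle x a := h1.elim id (fun h => h.trans hab.symm)
    have hy : σ.SameCycle y a := h2.elim id (fun h => h.trans hab.symm)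
    exact hx.trans hy.symm

lemma dichot (σ : Perm (Fin n)) {a b : Fin n} (hab : a ≠ b) :
    σ.SameCycle a b ∨ (swap a b * σ).SameCycle a b := by
  by_cases hsc : σ.SameCycle a b
  · exact Or.inl hsc
  right
  have hex : ∃ k, 0 < k ∧ (σ ^ k) b = b :=
    ⟨orderOf σ, orderOf_pos σ, by rw [pow_orderOf_eq_one]; rfl⟩
  classical
  let k := Nat.find hex
  obtain ⟨hk0, hkb⟩ : 0 < k ∧ (σ ^ k) b = b := Nat.find_spec hex
  have hmin : ∀ j, j < k → ¬(0 < j ∧ (σ ^ j) b = b) := fun j hj => Nat.find_min hex hj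
  have hne : ∀ j, 0 < j → j < k → (σ ^ j) b ≠ b := fun j h1 h2 h3 => hmin j h2 ⟨h1, h3⟩
  have hnea : ∀ j : ℕ, (σ ^ j) b ≠ a := by
    intro j h3
    exact hsc (SameCycle.symm ⟨(j : ℤ), by rw [zpow_natCast]; exact h3⟩)
  have hclaim : ∀ j, j < k → ((swap a b * σ) ^ j) b = (σ ^ j) b := by
    intro j
    induction j with
    | zero => intro _; rfl
    | succ j ih =>
      intro hjk
      have hj : j < k := Nat.lt_of_succ_lt hjk
      rw [pow_succ', Perm.mul_apply, Perm.mul_apply, ih hj]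
      have h1 : σ ((σ ^ j) b) = (σ ^ (j + 1)) b := by rw [pow_succ', Perm.mul_apply]
      rw [h1, swap_apply_of_ne_of_ne (hnea (j + 1)) (hne (j + 1) (Nat.succ_pos j) hjk)]
  obtain ⟨j, hjeq⟩ : ∃ j, k = j + 1 := ⟨k - 1, by omega⟩
  have hcomp : ((swap a b * σ) ^ k) b = a := by
    rw [hjeq, pow_succ', Perm.mul_apply, Perm.mul_apply, hclaim j (by omega)]
    have h1 : σ ((σ ^ j) b) = (σ ^ (j + 1)) b := by rw [pow_succ', Perm.mul_apply]
    rw [h1, ← hjeq, hkb, swap_apply_right]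
  exact SameCycle.symm ⟨(k : ℤ), by rw [zpow_natCast]; exact hcomp⟩

lemma cnt_swap_mul_ge (σ : Perm (Fin n)) (a b : Fin n) :
    cnt σ ≤ cnt (swap a b * σ) + 1 := by
  have h1 : Nat.card (Quotient (joinS (SameCycle.setoid σ) a b))
      ≤ cnt (swap a b * σ) :=
    count_le_of_le (fun x y h => sameCycle_swap_mul_le σ a b h)
  have h2 := count_join_ge (SameCycle.setoid σ) a b
  calc cnt σ ≤ Nat.card (Quotient (joinS (SameCycle.setoid σ) a b)) + 1 := h2
    _ ≤ cnt (swap a b * σ) + 1 := by omega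

lemma cnt_swap_mul_le (σ : Perm (Fin n)) (a b : Fin n) :
    cnt (swap a b * σ) ≤ cnt σ + 1 := by
  have h := cnt_swap_mul_ge (swap a b * σ) a b
  rwa [← mul_assoc, swap_mul_self, one_mul] at h

lemma cnt_swap_mul_ne (σ : Perm (Fin n)) {a b : Fin n} (hab : a ≠ b) :
    cnt (swap a b * σ) ≠ cnt σ := by
  intro hEq
  have h1 := sign_cnt (swap a b * σ)
  rw [hEq, ← sign_cnt σ, Perm.sign_mul, sign_swap hab] at h1
  rcases Int.units_eq_one_or (Perm.sign σ) with h | h <;> rw [h] at h1 <;>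
    exact absurd h1 (by decide)

lemma split_of_sameCycle {σ : Perm (Fin n)} {a b : Fin n} (hab : a ≠ b)
    (h : σ.SameCycle a b) : cnt (swap a b * σ) = cnt σ + 1 := by
  have h1 : cnt σ ≤ cnt (swap a b * σ) :=
    count_le_of_le (fun x y hxy => sameCycle_swap_mul_of_sameCycle h hxy)
  have h2 := cnt_swap_mul_le σ a b
  have h3 := cnt_swap_mul_ne σ hab
  omega

lemma merge_lemma {σ : Perm (Fin n)} {a b : Fin n} (hab : a ≠ b)
    (h : cnt (swap a b * σ) + 1 = cnt σ) :
    (∀ x y, σ.SameCycle x y → (swap a b * σ).SameCycle x y) ∧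
      ¬ σ.SameCycle a b ∧ (swap a b * σ).SameCycle a b := by
  have hnab : ¬ σ.SameCycle a b := by
    intro hsc
    have := split_of_sameCycle hab hsc
    omega
  have hab2 : (swap a b * σ).SameCycle a b := (dichot σ hab).resolve_left hnab
  refine ⟨?_, hnab, hab2⟩
  intro x y hxy
  have hxy2 : (swap a b * (swap a b * σ)).SameCycle x y := by
    rwa [← mul_assoc, swap_mul_self, one_mul]
  exact sameCycle_swap_mul_of_sameCycle hab2 hxy2

/-- invariant colourings -/
def invF (m : ℕ) (σ : Perm (Fin n)) : Finset (Fin n → Fin m) :=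
  univ.filter (fun φ => ∀ x, φ (σ x) = φ x)

lemma mem_invF_iff {σ : Perm (Fin n)} {φ : Fin n → Fin m} :
    φ ∈ invF m σ ↔ ∀ x y, σ.SameCycle x y → φ x = φ y := by
  simp only [invF, mem_filter, mem_univ, true_and]
  constructor
  · intro hφ
    have haux : ∀ (i : ℕ) (x : Fin n), φ ((σ ^ i) x) = φ x := by
      intro i
      induction i with
      | zero => intro x; rfl
      | succ i ih => intro x; rw [pow_succ, Perm.mul_apply, ih (σ x), hφ]
    intro x y hxy
    obtain ⟨i, -, hi⟩ := hxy.exists_pow_eq'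
    rw [← hi, haux]
  · intro hconst x
    exact (hconst x (σ x) ⟨1, by simp⟩).symm

lemma kform (z : Fin m → ℝ) (σ : Perm (Fin n)) :
    powerSumKernel z σ 1 = ∑ φ ∈ invF m σ, ∏ x, z (φ x) := by
  have h0 : powerSumKernel z σ 1 = ((cycleMu σ).map (fun d => ∑ i, z i ^ d)).prod := by
    rw [powerSumKernel, inv_one, mul_one]
  rw [h0, cycleMu_eq σ, Multiset.map_map]
  have h1 : (Multiset.map ((fun d => ∑ i, z i ^ d) ∘
      (fun q => (univ.filter (fun x => Quotient.mk (SameCycle.setoid σ) x = q)).card))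
      (univ : Finset (Quotient (SameCycle.setoid σ))).val).prod
      = ∏ q : Quotient (SameCycle.setoid σ), ∑ i,
        z i ^ (univ.filter (fun x => Quotient.mk (SameCycle.setoid σ) x = q)).card := rfl
  rw [h1, Fintype.prod_sum]
  refine Finset.sum_nbij' (i := fun c => c ∘ Quotient.mk (SameCycle.setoid σ))
    (j := fun φ q => φ q.out) ?_ ?_ ?_ ?_ ?_
  · intro c _
    rw [mem_invF_iff]
    intro x y hxy
    exact congrArg c (Quotient.sound hxy)
  · intro φ _; exact mem_univ _
  · intro c _
    funext q
    induction q using Quotient.ind with | _ x => ?_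
    show c (Quotient.mk _ (Quotient.mk (SameCycle.setoid σ) x).out) = c _
    rw [Quotient.out_eq]
  · intro φ hφ
    funext x
    have hout : σ.SameCycle (Quotient.mk (SameCycle.setoid σ) x).out x :=
      @Quotient.mk_out _ (SameCycle.setoid σ) x
    exact mem_invF_iff.mp hφ _ _ hout
  · intro c _
    have := Finset.prod_fiberwise_of_maps_to
      (g := Quotient.mk (SameCycle.setoid σ)) (t := univ)
      (fun x (_ : x ∈ univ) => mem_univ _) (fun x => z (c (Quotient.mk (SameCycle.setoid σ) x)))
    show ∏ q : Quotient (SameCycle.setoid σ),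
        z (c q) ^ (univ.filter (fun x => Quotient.mk (SameCycle.setoid σ) x = q)).card
      = ∏ x : Fin n, z (c (Quotient.mk (SameCycle.setoid σ) x))
    rw [← this]
    refine Finset.prod_congr rfl (fun q _ => ?_)
    refine Eq.symm ?_
    calc ∏ x ∈ univ.filter (fun x => Quotient.mk (SameCycle.setoid σ) x = q),
          z (c (Quotient.mk (SameCycle.setoid σ) x))
        = ∏ x ∈ univ.filter (fun x => Quotient.mk (SameCycle.setoid σ) x = q), z (c q) :=
          Finset.prod_congr rfl (fun x hx => by rw [(Finset.mem_filter.mp hx).2])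
      _ = z (c q) ^ (univ.filter (fun x => Quotient.mk (SameCycle.setoid σ) x = q)).card :=
          Finset.prod_const _

lemma adj_iff {u v : Equiv.Perm (Fin n)} :
    (cayleyGraph n).Adj u v ↔ u ≠ v ∧ ∃ a b, a ≠ b ∧ u = swap a b * v := by
  rw [cayleyGraph, SimpleGraph.fromRel_adj]
  constructor
  · rintro ⟨hne, (⟨a, b, hab, hs⟩ | ⟨a, b, hab, hs⟩)⟩
    · exact ⟨hne, a, b, hab, by rw [← hs, inv_mul_cancel_right]⟩
    · refine ⟨hne, a, b, hab, ?_⟩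
      have hv : v = swap a b * u := by rw [← hs, inv_mul_cancel_right]
      rw [hv, ← mul_assoc, swap_mul_self, one_mul]
  · rintro ⟨hne, a, b, hab, rfl⟩
    exact ⟨hne, Or.inl ⟨a, b, hab, by rw [mul_inv_cancel_right]⟩⟩

lemma walk_bound {u v : Equiv.Perm (Fin n)} (W : (cayleyGraph n).Walk u v) :
    cnt u ≤ cnt v + W.length ∧ cnt v ≤ cnt u + W.length := by
  induction W with
  | nil => simp
  | cons hadj W ih =>
    obtain ⟨-, a, b, hab, huv⟩ := adj_iff.mp hadj
    have h1 : cnt _ ≤ cnt _ + 1 := huv ▸ cnt_swap_mul_le _ a b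
    have h2 : cnt _ ≤ cnt _ + 1 := huv ▸ cnt_swap_mul_ge _ a b
    rw [SimpleGraph.Walk.length_cons]
    omega

lemma walk_exists (σ : Equiv.Perm (Fin n)) :
    ∃ W : (cayleyGraph n).Walk 1 σ, W.length + cnt σ = n := by
  suffices h : ∀ k (σ : Equiv.Perm (Fin n)), n ≤ cnt σ + k →
      ∃ W : (cayleyGraph n).Walk 1 σ, W.length + cnt σ = n by
    exact h n σ (by have := cnt_le σ; omega)
  intro k
  induction k with
  | zero =>
    intro σ hk
    have h1 : σ = 1 := eq_one_of_cnt_eq σ (le_antisymm (cnt_le σ) (by omega))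
    subst h1
    exact ⟨SimpleGraph.Walk.nil, by simp [cnt_one]⟩
  | succ k ih =>
    intro σ hk
    by_cases h1 : σ = 1
    · subst h1; exact ⟨SimpleGraph.Walk.nil, by simp [cnt_one]⟩
    · obtain ⟨x, hx⟩ : ∃ x, σ x ≠ x := by
        by_contra hall
        push_neg at hall
        exact h1 (Equiv.ext hall)
      have hab : x ≠ σ x := fun h => hx h.symm
      have hsc : σ.SameCycle x (σ x) := ⟨1, by simp⟩
      have hsplit : cnt (swap x (σ x) * σ) = cnt σ + 1 := split_of_sameCycle hab hsc
      obtain ⟨W, hW⟩ := ih (swap x (σ x) * σ) (by omega)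
      have hne : swap x (σ x) * σ ≠ σ := by
        intro hEq
        have : swap x (σ x) = 1 := by
          have := congrArg (· * σ⁻¹) hEq
          simpa [mul_assoc] using this
        exact hab (swap_eq_one_iff.mp this)
      have hadj : (cayleyGraph n).Adj (swap x (σ x) * σ) σ :=
        adj_iff.mpr ⟨hne, x, σ x, hab, rfl⟩
      exact ⟨W.concat hadj, by rw [SimpleGraph.Walk.length_concat]; omega⟩

lemma dist_formula (σ : Equiv.Perm (Fin n)) :
    (cayleyGraph n).dist 1 σ + cnt σ = n := by
  obtain ⟨W, hW⟩ := walk_exists σ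
  have hle : (cayleyGraph n).dist 1 σ ≤ W.length := SimpleGraph.dist_le W
  have hreach : (cayleyGraph n).Reachable 1 σ := ⟨W⟩
  obtain ⟨P, hP⟩ := hreach.exists_walk_length_eq_dist
  have hbound := (walk_bound P).1
  rw [hP, cnt_one] at hbound
  omega

lemma descent {h g : Equiv.Perm (Fin n)} (W : (cayleyGraph n).Walk h g)
    (hW : cnt h = cnt g + W.length) :
    (∀ x y, h.SameCycle x y → g.SameCycle x y) ∧
      (h ≠ g → ∃ a b, ¬ h.SameCycle a b ∧ g.SameCycle a b) := by
  induction W with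
  | nil => exact ⟨fun x y hxy => hxy, fun hne => absurd rfl hne⟩
  | @cons u v w hadj W ih =>
    rw [SimpleGraph.Walk.length_cons] at hW
    obtain ⟨-, a, b, hab, huv⟩ := adj_iff.mp hadj
    have hbW := (walk_bound W).1
    have hle : cnt u ≤ cnt v + 1 := huv ▸ cnt_swap_mul_le _ a b
    have hcv : cnt v = cnt w + W.length := by omega
    have hcu : cnt v + 1 = cnt u := by omega
    -- u = swap a b * v, hence v = swap a b * u and cnt v + 1 = cnt u
    have hvu : v = swap a b * u := by
      rw [huv, ← mul_assoc, swap_mul_self, one_mul]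
    have hmerge := merge_lemma (σ := u) hab (by rw [← hvu]; omega)
    obtain ⟨hmono, hnab, hvab⟩ := hmerge
    have ihW := ih hcv
    constructor
    · intro x y hxy
      exact ihW.1 x y (by rw [← hvu] at hmono; exact hmono x y hxy)
    · intro _
      refine ⟨a, b, hnab, ?_⟩
      exact ihW.1 a b (by rw [← hvu] at hvab; exact hvab)

end CayleyAux

open CayleyAux Equiv Equiv.Perm

theorem powerSumKernel_monotone_along_geodesics {n m : ℕ} (hm : 1 < m)
    (z : Fin m → ℝ) (hz : ∀ j, 0 ≤ z j) (g h : Equiv.Perm (Fin n))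
    (hhg : cayleyPrec h g) :
    powerSumKernel z g 1 ≤ powerSumKernel z h 1 ∧
      ((∃ j l : Fin m, j ≠ l ∧ 0 < z j ∧ 0 < z l) → h ≠ g →
        powerSumKernel z g 1 < powerSumKernel z h 1) := by
  classical
  have hd1 := dist_formula (n := n) h
  have hd2 := dist_formula (n := n) g
  rw [cayleyPrec] at hhg
  obtain ⟨Wh, -⟩ := walk_exists h
  obtain ⟨Wg, -⟩ := walk_exists g
  have hreach : (cayleyGraph n).Reachable h g :=
    (SimpleGraph.Reachable.symm ⟨Wh⟩).trans ⟨Wg⟩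
  obtain ⟨W, hWlen⟩ := hreach.exists_walk_length_eq_dist
  have hcnt : cnt h = cnt g + W.length := by rw [hWlen]; omega
  obtain ⟨hmono, hwit⟩ := descent W hcnt
  have hsub : invF m g ⊆ invF m h := by
    intro φ hφ
    rw [mem_invF_iff] at hφ ⊢
    exact fun x y hxy => hφ x y (hmono x y hxy)
  have hweak : powerSumKernel z g 1 ≤ powerSumKernel z h 1 := by
    rw [kform, kform]
    exact Finset.sum_le_sum_of_subset_of_nonneg hsub
      (fun φ _ _ => Finset.prod_nonneg (fun x _ => hz (φ x)))
  refine ⟨hweak, ?_⟩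
  rintro ⟨j, l, hjl, hzj, hzl⟩ hne
  obtain ⟨a, b, hnab, hgab⟩ := hwit hne
  set φ : Fin n → Fin m := fun x => if h.SameCycle a x then j else l with hφdef
  have hφh : φ ∈ invF m h := by
    rw [mem_invF_iff]
    intro x y hxy
    simp only [hφdef]
    by_cases hax : h.SameCycle a x
    · rw [if_pos hax, if_pos (hax.trans hxy)]
    · rw [if_neg hax, if_neg (fun hay => hax (hay.trans hxy.symm))]
  have hφg : φ ∉ invF m g := by
    intro hmem
    have hcontra := (mem_invF_iff.mp hmem) a b hgab
    simp only [hφdef] at hcontra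
    rw [if_pos (SameCycle.refl _ _), if_neg hnab] at hcontra
    exact hjl hcontra
  have hφpos : 0 < ∏ x, z (φ x) := by
    refine Finset.prod_pos (fun x _ => ?_)
    simp only [hφdef]
    by_cases hax : h.SameCycle a x
    · rw [if_pos hax]; exact hzj
    · rw [if_neg hax]; exact hzl
  rw [kform, kform]
  have hins : insert φ (invF m g) ⊆ invF m h := Finset.insert_subset hφh hsub
  calc ∑ ψ ∈ invF m g, ∏ x, z (ψ x)
      < ∑ ψ ∈ insert φ (invF m g), ∏ x, z (ψ x) := by
        rw [Finset.sum_insert hφg]; linarith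
    _ ≤ ∑ ψ ∈ invF m h, ∏ x, z (ψ x) :=
        Finset.sum_le_sum_of_subset_of_nonneg hins
          (fun ψ _ _ => Finset.prod_nonneg (fun x _ => hz (ψ x)))
end

section
/- For z = (1,...,1) ∈ ℝ^m, the power sum kernel k_z(g,h) = m^{ℓ(g h^{-1})} can be written as a function of the Cayley distance: k_z(g,h) = m^n · exp(-β · d_C(g,h)), where β = log m and d_C is the Cayley distance; in particular the Cayley distance kernel exp(-β d_C(g,h)) with e^β = m a positive integer is positive semidefinite on S_n. -/
/-!
The number `ℓ(σ)` of cycles of a permutation `σ` of a finite set is the dimension of the space of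
`σ`-invariant functions. Composing with a transposition `swap a b` lowers `ℓ` by at most one (the
invariant functions with `F a = F b` stay invariant), and `swap x (σ x)` raises it strictly when
`σ x ≠ x`. Hence the Cayley distance is `d(g, h) = n - ℓ(g h⁻¹)`, so that
`m ^ n * exp (-log m * d(g, h)) = m ^ ℓ(g h⁻¹)`, which is also the number of colourings
`F : Fin n → Fin m` with `F ∘ g = F ∘ h`. A kernel counting agreements of colourings is a sum of
Gram matrices of indicator vectors, hence positive semidefinite.
-/

open Equiv Equiv.Perm Function Finset

theorem finrank_le_finrank_inf_ker_add_one {K V : Type*} [Field K] [AddCommGroup V] [Module K V]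
    [FiniteDimensional K V] (W : Submodule K V) (φ : V →ₗ[K] K) :
    Module.finrank K W ≤ Module.finrank K ↥(W ⊓ LinearMap.ker φ) + 1 := by
  have hsum := Submodule.finrank_sup_add_finrank_inf_eq W (LinearMap.ker φ)
  have hsup := Submodule.finrank_le (W ⊔ LinearMap.ker φ)
  have hker := LinearMap.finrank_range_add_finrank_ker φ
  have hrange := (Submodule.finrank_le (LinearMap.range φ)).trans (Module.finrank_self K).le
  omega

namespace Equiv.Perm

variable {α : Type*}

noncomputable def numCycles (σ : Perm α) : ℕ := Nat.card (Quotient (SameCycle.setoid σ))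

section Invariance

variable {β : Type*} {σ : Perm α} {F : α → β}

theorem comp_zpow_eq_self (h : F ∘ σ = F) (i : ℤ) : F ∘ ⇑(σ ^ i) = F := by
  induction i using Int.induction_on with
  | zero => rfl
  | succ i ih => rw [zpow_add_one, coe_mul, ← comp_assoc, ih, h]
  | pred i ih =>
    rw [zpow_sub_one, coe_mul, ← comp_assoc, ih]
    conv_lhs => rw [← h]
    rw [comp_assoc, ← coe_mul, mul_inv_cancel, coe_one, comp_id]

theorem comp_eq_self_iff_sameCycle : F ∘ σ = F ↔ ∀ x y, σ.SameCycle x y → F x = F y := by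
  refine ⟨fun h x y ⟨i, hi⟩ => hi ▸ (congrFun (comp_zpow_eq_self h i) x).symm, fun h => ?_⟩
  exact funext fun x => h _ _ (sameCycle_apply_left.2 (.refl σ x))

theorem comp_eq_self_iff_exists_comp_mk :
    F ∘ σ = F ↔ ∃ G : Quotient (SameCycle.setoid σ) → β, G ∘ Quotient.mk _ = F := by
  rw [comp_eq_self_iff_sameCycle]
  exact ⟨fun h => ⟨Quotient.lift F h, rfl⟩,
    fun ⟨G, hG⟩ x y hxy => hG ▸ congrArg G (Quotient.sound hxy)⟩

theorem comp_swap_mul_eq_self [DecidableEq α] {a b : α} (hσ : F ∘ σ = F) (hab : F a = F b) :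
    F ∘ ⇑(swap a b * σ) = F := by
  rw [coe_mul, ← comp_assoc, comp_swap_eq_update, hab, update_eq_self, ← hab, update_eq_self, hσ]

end Invariance

theorem card_comp_eq_self [Finite α] (β : Type*) (σ : Perm α) :
    Nat.card {F : α → β // F ∘ σ = F} = Nat.card β ^ σ.numCycles := by
  have hinj : Injective fun G : Quotient (SameCycle.setoid σ) → β => G ∘ Quotient.mk _ :=
    Quotient.mk_surjective.injective_comp_right
  rw [numCycles, ← Nat.card_fun, ← Nat.card_range_of_injective hinj]
  exact Nat.card_congr (Equiv.subtypeEquivRight fun F => comp_eq_self_iff_exists_comp_mk)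

theorem numCycles_le_card [Finite α] (σ : Perm α) : σ.numCycles ≤ Nat.card α :=
  Nat.card_le_card_of_surjective _ Quotient.mk_surjective

theorem card_filter_comp_eq_comp [Fintype α] [DecidableEq α] (β : Type*) [Fintype β]
    [DecidableEq β] (g h : Perm α) :
    #{F : α → β | F ∘ g = F ∘ h} = Fintype.card β ^ (g * h⁻¹).numCycles := by
  rw [← Fintype.card_subtype, ← Nat.card_eq_fintype_card, ← Nat.card_eq_fintype_card (α := β),
    ← card_comp_eq_self]
  refine Nat.card_congr (Equiv.subtypeEquivRight fun F => ?_)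
  rw [coe_mul, ← comp_assoc, Perm.inv_def, h.comp_symm_eq, eq_comm]

section Fintype

variable [Fintype α] [DecidableEq α]

def cycleClass (σ : Perm α) (x : α) : {x // x ∉ σ.support} ⊕ σ.cycleFactorsFinset :=
  if hx : x ∈ σ.support then .inr ⟨σ.cycleOf x, cycleOf_mem_cycleFactorsFinset_iff.2 hx⟩
  else .inl ⟨x, hx⟩

theorem cycleClass_eq_iff {σ : Perm α} {x y : α} :
    cycleClass σ x = cycleClass σ y ↔ σ.SameCycle x y := by
  by_cases hx : x ∈ σ.support <;> by_cases hy : y ∈ σ.support <;>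
    simp only [cycleClass, hx, hy, dite_true, dite_false, reduceCtorEq, false_iff, Sum.inr.injEq,
      Sum.inl.injEq, Subtype.mk.injEq]
  · exact (sameCycle_iff_cycleOf_eq_of_mem_support hx hy).symm
  · exact fun h => hy (h.mem_support_iff.1 hx)
  · exact fun h => hx (h.mem_support_iff.2 hy)
  · exact ⟨fun h => h ▸ .refl σ x, fun h => h.eq_of_left (notMem_support.1 hx)⟩

theorem cycleClass_surjective (σ : Perm α) : Surjective (cycleClass σ) := by
  rintro (⟨x, hx⟩ | ⟨c, hc⟩)
  · exact ⟨x, by simp [cycleClass, hx]⟩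
  · obtain ⟨x, hx⟩ := (mem_cycleFactorsFinset_iff.1 hc).1.nonempty_support
    have hxσ : x ∈ σ.support := mem_cycleFactorsFinset_support_le hc hx
    exact ⟨x, by simp [cycleClass, hxσ, cycle_is_cycleOf hx hc]⟩

theorem numCycles_eq_card_parts_partition (σ : Perm α) :
    σ.numCycles = Multiset.card σ.partition.parts := by
  have e := (Quotient.congrRight (r := SameCycle.setoid σ) (r' := Setoid.ker (cycleClass σ))
    fun _ _ => cycleClass_eq_iff.symm).trans
    (Setoid.quotientKerEquivOfSurjective _ (cycleClass_surjective σ))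
  rw [numCycles, Nat.card_congr e, Nat.card_sum, parts_partition, Multiset.card_add,
    Multiset.card_replicate, cycleType_def, Multiset.card_map, add_comm]
  simp only [Nat.card_eq_fintype_card, Fintype.card_subtype_compl, Fintype.card_coe]
  rfl

theorem numCycles_one : (1 : Perm α).numCycles = Fintype.card α := by
  simp [numCycles_eq_card_parts_partition, parts_partition]

end Fintype

section LinearAlgebra

variable {K : Type*} [Field K]

theorem mem_eigenspace_funLeft_one {σ : Perm α} {F : α → K} :
    F ∈ Module.End.eigenspace (LinearMap.funLeft K K σ) 1 ↔ F ∘ σ = F := by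
  rw [Module.End.mem_eigenspace_iff, one_smul]
  rfl

theorem finrank_eigenspace_funLeft_one [Finite α] (σ : Perm α) :
    Module.finrank K (Module.End.eigenspace (LinearMap.funLeft K K σ) 1) = σ.numCycles := by
  have : Fintype (Quotient (SameCycle.setoid σ)) := .ofFinite _
  let π := LinearMap.funLeft K K (Quotient.mk (SameCycle.setoid σ))
  have hπ : LinearMap.range π = Module.End.eigenspace (LinearMap.funLeft K K σ) 1 := by
    ext F
    rw [mem_eigenspace_funLeft_one, comp_eq_self_iff_exists_comp_mk]
    rfl
  rw [← hπ, LinearMap.finrank_range_of_inj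
    (LinearMap.funLeft_injective_of_surjective _ _ _ Quotient.mk_surjective),
    Module.finrank_fintype_fun_eq_card, numCycles, Nat.card_eq_fintype_card]

variable [Finite α] [DecidableEq α]

theorem numCycles_le_numCycles_swap_mul_add_one (σ : Perm α) (a b : α) :
    σ.numCycles ≤ (swap a b * σ).numCycles + 1 := by
  have hle : Module.End.eigenspace (LinearMap.funLeft ℚ ℚ σ) 1 ⊓
      LinearMap.ker (LinearMap.proj (R := ℚ) (φ := fun _ : α => ℚ) a - LinearMap.proj b) ≤
      Module.End.eigenspace (LinearMap.funLeft ℚ ℚ (swap a b * σ)) 1 := by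
    rintro F ⟨hσ, hab⟩
    rw [SetLike.mem_coe, LinearMap.mem_ker] at hab
    rw [SetLike.mem_coe, mem_eigenspace_funLeft_one] at hσ
    rw [mem_eigenspace_funLeft_one]
    exact comp_swap_mul_eq_self hσ (sub_eq_zero.1 hab)
  have := (finrank_le_finrank_inf_ker_add_one _ _).trans
    (Nat.add_le_add_right (Submodule.finrank_mono hle) 1)
  rwa [finrank_eigenspace_funLeft_one, finrank_eigenspace_funLeft_one] at this

theorem numCycles_lt_numCycles_swap_mul {σ : Perm α} {x : α} (hx : σ x ≠ x) :
    σ.numCycles < (swap x (σ x) * σ).numCycles := by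
  set τ := swap x (σ x) * σ with hτ
  have hfix : τ x = x := by rw [hτ, mul_apply, swap_apply_right]
  have hlt : Module.End.eigenspace (LinearMap.funLeft ℚ ℚ σ) 1 <
      Module.End.eigenspace (LinearMap.funLeft ℚ ℚ τ) 1 := by
    refine SetLike.lt_iff_le_and_exists.2 ⟨fun F hF => ?_, Pi.single x 1, ?_, ?_⟩ <;>
      simp only [mem_eigenspace_funLeft_one] at *
    · exact comp_swap_mul_eq_self hF (congrFun hF x).symm
    · funext y
      simp only [comp_apply, Pi.single_apply]
      exact if_congr ⟨fun h => τ.injective (h.trans hfix.symm), fun h => h ▸ hfix⟩ rfl rfl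
    · intro h
      have := congrFun h x
      simp [hx] at this
  have := Submodule.finrank_lt_finrank_of_lt hlt
  rwa [finrank_eigenspace_funLeft_one, finrank_eigenspace_funLeft_one] at this

end LinearAlgebra

end Equiv.Perm

section CayleyGraph

variable {n : ℕ}

theorem cayleyGraph_adj {g h : Perm (Fin n)} : (cayleyGraph n).Adj g h ↔ (g * h⁻¹).IsSwap := by
  rw [cayleyGraph, SimpleGraph.fromRel_adj]
  refine ⟨fun ⟨_, hs⟩ => hs.elim id fun hs => ?_, fun hs => ⟨?_, .inl hs⟩⟩
  · obtain ⟨a, b, hab, hs⟩ := hs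
    exact ⟨a, b, hab, by rw [← swap_inv, ← hs, mul_inv_rev, inv_inv]⟩
  · rintro rfl
    exact hs.isCycle.ne_one (mul_inv_cancel g)

theorem sub_numCycles_le_length {g h : Perm (Fin n)} (p : (cayleyGraph n).Walk g h) :
    n - (g * h⁻¹).numCycles ≤ p.length := by
  induction p with
  | nil => simp [numCycles_one]
  | @cons u v w huv p ih =>
    obtain ⟨a, b, -, hab⟩ := cayleyGraph_adj.1 huv
    have := numCycles_le_numCycles_swap_mul_add_one (v * w⁻¹) a b
    rw [← hab, ← mul_assoc, inv_mul_cancel_right] at this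
    rw [SimpleGraph.Walk.length_cons]
    omega

theorem exists_walk_length_le (g h : Perm (Fin n)) :
    ∃ p : (cayleyGraph n).Walk g h, p.length ≤ n - (g * h⁻¹).numCycles := by
  induction hk : n - (g * h⁻¹).numCycles using Nat.strong_induction_on generalizing g with
  | _ k ih =>
  by_cases hgh : g = h
  · subst hgh
    exact ⟨.nil, by simp⟩
  obtain ⟨x, hx⟩ : ∃ x, (g * h⁻¹) x ≠ x := by
    by_contra! hfix
    exact hgh (mul_inv_eq_one.1 (Equiv.ext hfix))
  set g' := swap x ((g * h⁻¹) x) * g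
  have hg' : g' * h⁻¹ = swap x ((g * h⁻¹) x) * (g * h⁻¹) := mul_assoc _ _ _
  have hlt := numCycles_lt_numCycles_swap_mul hx
  have hle := numCycles_le_card (swap x ((g * h⁻¹) x) * (g * h⁻¹))
  rw [Nat.card_fin] at hle
  obtain ⟨p, hp⟩ := ih _ (by rw [← hk, hg']; omega) g' rfl
  have hadj : (cayleyGraph n).Adj g g' := by
    rw [cayleyGraph_adj, mul_inv_rev, mul_inv_cancel_left, swap_inv]
    exact ⟨_, _, hx.symm, rfl⟩
  refine ⟨.cons hadj p, ?_⟩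
  rw [SimpleGraph.Walk.length_cons]
  rw [hg'] at hp
  omega

theorem dist_cayleyGraph (g h : Perm (Fin n)) :
    (cayleyGraph n).dist g h = n - (g * h⁻¹).numCycles := by
  obtain ⟨p, hp⟩ := exists_walk_length_le g h
  obtain ⟨q, hq⟩ := SimpleGraph.Reachable.exists_walk_length_eq_dist ⟨p⟩
  exact le_antisymm ((SimpleGraph.dist_le p).trans hp) (hq ▸ sub_numCycles_le_length q)

end CayleyGraph

theorem card_cycleMu {n : ℕ} (σ : Perm (Fin n)) : Multiset.card (cycleMu σ) = σ.numCycles := by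
  rw [numCycles_eq_card_parts_partition, parts_partition, cycleMu, sum_cycleType, Fintype.card_fin]

theorem powerSumKernel_const_one {n : ℕ} (m : ℕ) (g h : Perm (Fin n)) :
    powerSumKernel (fun _ : Fin m => (1 : ℝ)) g h = (m : ℝ) ^ Multiset.card (cycleMu (g * h⁻¹)) := by
  simp [powerSumKernel, Multiset.map_const']

theorem pow_mul_exp_neg_log_mul {x : ℝ} (hx : 0 < x) {c n : ℕ} (hc : c ≤ n) :
    x ^ n * Real.exp (-Real.log x * ↑(n - c)) = x ^ c := by
  rw [neg_mul, Real.exp_neg, ← Real.rpow_def_of_pos hx, Real.rpow_natCast,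
    ← Nat.add_sub_cancel' hc, pow_add, Nat.add_sub_cancel_left,
    mul_inv_cancel_right₀ (pow_ne_zero _ hx.ne')]

theorem sum_ite_eq_sum_sq {ι κ R : Type*} [Fintype ι] [Fintype κ] [DecidableEq κ] [CommSemiring R]
    (c : ι → κ) (a : ι → R) :
    ∑ i, ∑ j, (if c i = c j then a i * a j else 0) = ∑ u, (∑ i with c i = u, a i) ^ 2 := by
  simp_rw [sq, Finset.sum_filter, Finset.sum_mul_sum, ite_mul, mul_ite, zero_mul, mul_zero, ite_self]
  conv_rhs => rw [Finset.sum_comm]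
  simp [eq_comm]

theorem sum_mul_mul_card_filter_eq_nonneg {ι Ω κ R : Type*} [Fintype ι] [Fintype Ω] [Fintype κ]
    [DecidableEq κ] [CommRing R] [LinearOrder R] [IsStrictOrderedRing R] (f : ι → Ω → κ)
    (a : ι → R) : 0 ≤ ∑ i, ∑ j, a i * a j * #{ω | f i ω = f j ω} := by
  simp_rw [Finset.natCast_card_filter, Finset.mul_sum, mul_ite, mul_one, mul_zero]
  rw [Finset.sum_congr rfl fun i _ => Finset.sum_comm, Finset.sum_comm]
  refine Finset.sum_nonneg fun ω _ => ?_
  rw [sum_ite_eq_sum_sq (f · ω)]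
  positivity

theorem powerSumKernel_ones_cayley {n m : ℕ} (hm : 0 < m) :
    (∀ g h : Equiv.Perm (Fin n),
      powerSumKernel (fun _ : Fin m => (1 : ℝ)) g h
        = (m : ℝ) ^ Multiset.card (cycleMu (g * h⁻¹)) ∧
      powerSumKernel (fun _ : Fin m => (1 : ℝ)) g h
        = (m : ℝ) ^ n * Real.exp (-(Real.log m) * (cayleyGraph n).dist g h)) ∧
    ∀ (N : ℕ) (g : Fin N → Equiv.Perm (Fin n)) (a : Fin N → ℝ),
      0 ≤ ∑ i, ∑ j,
        a i * a j * Real.exp (-(Real.log m) * (cayleyGraph n).dist (g i) (g j)) := by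
  have hm' : (0 : ℝ) < m := Nat.cast_pos.2 hm
  have hexp (g h : Perm (Fin n)) :
      (m : ℝ) ^ n * Real.exp (-Real.log m * (cayleyGraph n).dist g h)
        = (m : ℝ) ^ (g * h⁻¹).numCycles := by
    rw [dist_cayleyGraph]
    exact pow_mul_exp_neg_log_mul hm' ((numCycles_le_card _).trans_eq (Nat.card_fin n))
  refine ⟨fun g h => ⟨powerSumKernel_const_one m g h, ?_⟩, fun N g a => ?_⟩
  · rw [powerSumKernel_const_one, hexp, card_cycleMu]
  · have hagree (i j : Fin N) : Real.exp (-Real.log m * (cayleyGraph n).dist (g i) (g j)) =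
        #{F : Fin n → Fin m | F ∘ g i = F ∘ g j} / (m : ℝ) ^ n := by
      rw [eq_div_iff (by positivity), mul_comm, hexp, card_filter_comp_eq_comp, Fintype.card_fin,
        Nat.cast_pow]
    simp_rw [hagree, mul_div_assoc', ← Finset.sum_div]
    exact div_nonneg (sum_mul_mul_card_filter_eq_nonneg _ a) (by positivity)
end
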